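/- Let S ⊆ ℝ^d be closed with reach rch(S) > 0, and let F : U → ℝ^d be injective and continuously differentiable on an open neighbourhood U = {x : dist(x,S) < s} of S (s > 0), with F, F⁻¹, DF Lipschitz with constants Lip(F), Lip(F⁻¹), Lip(DF). Then for every 0 < t < rch(S), rch(F(S)) ≥ min( s / Lip(F⁻¹), 1 / ((Lip(F)/t + Lip(DF)) · Lip(F⁻¹)²) ). -/

import Mathlib

open Metric Set
open scoped ENNReal NNReal

noncomputable def proj {d : ℕ} (S : Set (EuclideanSpace ℝ (Fin d)))
    (x : EuclideanSpace ℝ (Fin d)) : Set (EuclideanSpace ℝ (Fin d)) :=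
  {q ∈ S | dist x q = Metric.infDist x S}

def medialAxis {d : ℕ} (S : Set (EuclideanSpace ℝ (Fin d))) :
    Set (EuclideanSpace ℝ (Fin d)) :=
  {x | (proj S x).Nontrivial}

/-- The reach of a set, as the infimum over points of the set of the (extended)
distance to the medial axis. -/
noncomputable def reach {d : ℕ} (S : Set (EuclideanSpace ℝ (Fin d))) : ℝ≥0∞ :=
  ⨅ p ∈ S, EMetric.infEdist p (medialAxis S)

open Filter
open scoped RealInnerProductSpace Topology

/-!
Let `m` be a point of the medial axis of `F(S)`, at distance `r` from `F(S)`, with two nearest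
points `F p₁ ≠ F p₂`, and let `v = (m - F p₁) / r`. The open ball of radius `r` around `m` misses
`F(S)`; pulling it back by `F` to first order, a small ball tangent to `S` at `p₁` in the
direction `DF(p₁)* v` misses `S`. Since `t < rch(S)`, this tangent ball can be inflated to radius
`t`: along a normal ray the distance to `S` grows at unit speed as long as nearest points are
unique. Hence `2t ⟪p₂ - p₁, DF(p₁)* v⟫ ≤ Lip(F) ‖p₂ - p₁‖²`. Together with the Taylor bound
`‖F p₂ - F p₁ - DF(p₁)(p₂ - p₁)‖ ≤ Lip(DF) ‖p₂ - p₁‖² / 2`, the chord identity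
`‖F p₂ - F p₁‖² = 2r ⟪F p₂ - F p₁, v⟫` and `‖p₂ - p₁‖ ≤ Lip(F⁻¹) ‖F p₂ - F p₁‖`, this forces
`r ≥ 1 / ((Lip(F)/t + Lip(DF)) Lip(F⁻¹)²)`, unless `r ≥ s / Lip(F⁻¹)`, in which case the segment
`[p₁, p₂]` need not stay in the domain of `F`.
-/

section General

variable {E E' : Type*} [NormedAddCommGroup E] [NormedAddCommGroup E']

theorem norm_sub_sub_apply_le_of_lipschitzOnWith [NormedSpace ℝ E] [NormedSpace ℝ E']
    {f : E → E'} {f' : E → E →L[ℝ] E'} {x y : E}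
    {K : ℝ≥0} (hf : ∀ z ∈ segment ℝ x y, HasFDerivAt f (f' z) z)
    (hf' : LipschitzOnWith K f' (segment ℝ x y)) :
    ‖f y - f x - f' x (y - x)‖ ≤ K / 2 * ‖y - x‖ ^ 2 := by
  set L : ℝ → E := fun θ => x + θ • (y - x)
  have hL : ∀ θ ∈ Icc (0:ℝ) 1, L θ ∈ segment ℝ x y := fun θ hθ => by
    rw [segment_eq_image']; exact ⟨θ, hθ, rfl⟩
  have hderiv : ∀ θ ∈ Icc (0:ℝ) 1, HasDerivAt (fun θ => f (L θ) - f x - θ • f' x (y - x))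
      (f' (L θ) (y - x) - f' x (y - x)) θ := by
    intro θ hθ
    have hLd : HasDerivAt L (y - x) θ := by
      convert ((hasDerivAt_id θ).smul_const (y - x)).const_add x using 1
      exacts [rfl, (one_smul ℝ _).symm]
    convert (((hf _ (hL θ hθ)).comp_hasDerivAt θ hLd).sub_const (f x)).sub
      ((hasDerivAt_id θ).smul_const (f' x (y - x))) using 1
    exacts [rfl, by rw [one_smul]]
  have hbound : ∀ θ ∈ Ico (0:ℝ) 1,
      ‖f' (L θ) (y - x) - f' x (y - x)‖ ≤ K * ‖y - x‖ ^ 2 * θ := by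
    intro θ hθ
    have hLx : dist (L θ) x = θ * ‖y - x‖ := by
      simp [L, dist_eq_norm, norm_smul, abs_of_nonneg hθ.1]
    calc ‖f' (L θ) (y - x) - f' x (y - x)‖ = ‖(f' (L θ) - f' x) (y - x)‖ := rfl
      _ ≤ ‖f' (L θ) - f' x‖ * ‖y - x‖ := (f' (L θ) - f' x).le_opNorm _
      _ ≤ K * dist (L θ) x * ‖y - x‖ := by
          gcongr
          exact dist_eq_norm (f' (L θ)) (f' x) ▸
            hf'.dist_le_mul _ (hL θ (Ico_subset_Icc_self hθ)) _ (left_mem_segment ℝ x y)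
      _ = K * ‖y - x‖ ^ 2 * θ := by rw [hLx]; ring
  have key := image_norm_le_of_norm_deriv_right_le_deriv_boundary (a := 0) (b := 1)
    (B := fun θ => K / 2 * ‖y - x‖ ^ 2 * θ ^ 2) (B' := fun θ => K * ‖y - x‖ ^ 2 * θ)
    (fun θ hθ => (hderiv θ hθ).continuousAt.continuousWithinAt)
    (fun θ hθ => (hderiv θ (Ico_subset_Icc_self hθ)).hasDerivWithinAt) (by simp [L])
    (fun θ => ((hasDerivAt_pow 2 θ).const_mul (K / 2 * ‖y - x‖ ^ 2)).congr_deriv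
      (by push_cast; ring))
    hbound (right_mem_Icc.2 zero_le_one)
  simpa [L] using key

theorem segment_subset_setOf_infDist_lt [NormedSpace ℝ E] {S : Set E} {x y : E} {s : ℝ}
    (hx : x ∈ S) (hy : y ∈ S) (hxy : dist x y < 2 * s) :
    segment ℝ x y ⊆ {z | infDist z S < s} := by
  intro z hz
  have hsum := dist_add_dist_of_mem_segment hz
  have hzx := infDist_le_dist_of_mem (x := z) hx
  have hzy := infDist_le_dist_of_mem (x := z) hy
  rw [dist_comm] at hzx
  show infDist z S < s
  linarith

theorem two_mul_inner_eq_norm_sq_of_dist_eq [InnerProductSpace ℝ E] {m a b : E}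
    (h : dist m a = dist m b) : 2 * ⟪b - a, m - a⟫ = ‖b - a‖ ^ 2 := by
  have hexp := norm_sub_sq_real (m - a) (b - a)
  rw [sub_sub_sub_cancel_right, ← dist_eq_norm, ← dist_eq_norm, ← h, real_inner_comm] at hexp
  linarith

theorem le_norm_sub_smul_iff [InnerProductSpace ℝ E] {x v : E} {r : ℝ} (hv : ‖v‖ = 1)
    (hr : 0 ≤ r) : r ≤ ‖x - r • v‖ ↔ 2 * r * ⟪x, v⟫ ≤ ‖x‖ ^ 2 := by
  rw [← pow_le_pow_iff_left₀ hr (norm_nonneg _) two_ne_zero, norm_sub_sq_real,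
    real_inner_smul_right, norm_smul, hv, mul_one, Real.norm_of_nonneg hr]
  constructor <;> intro h <;> linarith

theorem eq_smul_of_norm_le_of_le_norm_add [InnerProductSpace ℝ E] {a w : E} {σ χ : ℝ}
    (hw : ‖w‖ = 1) (hχ : 0 < χ) (ha : ‖a‖ ≤ σ) (h : χ + σ ≤ ‖a + χ • w‖) : a = σ • w := by
  have hσ : 0 ≤ σ := (norm_nonneg a).trans ha
  have hexp := norm_add_sq_real a (χ • w)
  rw [real_inner_smul_right, norm_smul, hw, mul_one, Real.norm_of_nonneg hχ.le] at hexp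
  have haw : σ ≤ ⟪a, w⟫ := by nlinarith [norm_nonneg a]
  have hexp' := norm_sub_sq_real a (σ • w)
  rw [real_inner_smul_right, norm_smul, hw, mul_one, Real.norm_of_nonneg hσ] at hexp'
  have hsq : ‖a - σ • w‖ ^ 2 ≤ 0 := by
    nlinarith [mul_le_mul_of_nonneg_left haw hσ, pow_le_pow_left₀ (norm_nonneg a) ha 2]
  exact sub_eq_zero.1 (norm_eq_zero.1 (pow_eq_zero_iff two_ne_zero |>.1
    (le_antisymm hsq (sq_nonneg _))))

theorem exists_mem_closedBall_add_mul_le [NormedSpace ℝ E] [ProperSpace E] {f : E → ℝ}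
    (hf : Continuous f) {x₀ : E} {σ c : ℝ} (hσ : 0 ≤ σ) (hc : 0 ≤ c)
    (hgrow : ∀ y, dist y x₀ < σ → f x₀ ≤ f y →
      ∃ η > 0, ∃ v : E, ‖v‖ ≤ 1 ∧ ∀ h ∈ Icc 0 η, f y + c * h ≤ f (y + h • v)) :
    ∃ y ∈ closedBall x₀ σ, f x₀ + c * σ ≤ f y := by
  -- continuous induction on the radius: a maximiser of `f` on the ball of the largest admissible
  -- radius can still be pushed outwards by `hgrow`
  set Q := {τ ∈ Icc 0 σ | ∃ y ∈ closedBall x₀ τ, f x₀ + c * τ ≤ f y}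
  have h0Q : (0 : ℝ) ∈ Q := ⟨⟨le_rfl, hσ⟩, x₀, mem_closedBall_self le_rfl, by simp⟩
  have hQbdd : BddAbove Q := ⟨σ, fun τ hτ => hτ.1.2⟩
  set β := sSup Q
  have hβσ : β ≤ σ := csSup_le ⟨0, h0Q⟩ fun τ hτ => hτ.1.2
  have hβ0 : 0 ≤ β := le_csSup hQbdd h0Q
  obtain ⟨y, hy, hymax⟩ := (isCompact_closedBall x₀ β).exists_isMaxOn
    ⟨x₀, mem_closedBall_self hβ0⟩ hf.continuousOn
  have hQy : ∀ τ ∈ Q, f x₀ + c * τ ≤ f y := by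
    rintro τ hτ
    obtain ⟨z, hz, hzτ⟩ := hτ.2
    exact hzτ.trans (hymax (closedBall_subset_closedBall (le_csSup hQbdd hτ) hz))
  have hyβ : f x₀ + c * β ≤ f y := by
    rcases hc.eq_or_lt with rfl | hc0
    · simpa using hQy 0 h0Q
    · have : β ≤ (f y - f x₀) / c := csSup_le ⟨0, h0Q⟩ fun τ hτ => by
        rw [le_div_iff₀' hc0]; linarith [hQy τ hτ]
      rw [le_div_iff₀' hc0] at this
      linarith
  refine ⟨y, closedBall_subset_closedBall hβσ hy, ?_⟩
  obtain hβσ | hβσ := hβσ.eq_or_lt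
  · rwa [← hβσ]
  exfalso
  obtain ⟨η, hη, v, hv, hyv⟩ := hgrow y ((mem_closedBall.1 hy).trans_lt hβσ)
    (by nlinarith)
  set h := min η (σ - β)
  have hh : 0 < h := lt_min hη (by linarith)
  have hmem : β + h ∈ Q := by
    refine ⟨⟨by linarith, by linarith [min_le_right η (σ - β)]⟩, y + h • v, ?_, ?_⟩
    · rw [mem_closedBall]
      calc dist (y + h • v) x₀ ≤ dist (y + h • v) y + dist y x₀ := dist_triangle _ _ _
        _ ≤ h + β := by
          gcongr
          · rw [dist_eq_norm, add_sub_cancel_left, norm_smul, Real.norm_of_nonneg hh.le]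
            exact mul_le_of_le_one_right hh.le hv
          · exact mem_closedBall.1 hy
        _ = β + h := add_comm h β
    · linarith [hyv h ⟨hh.le, min_le_left η (σ - β)⟩]
  linarith [le_csSup hQbdd hmem]

theorem exists_mem_closedBall_add_le [NormedSpace ℝ E] [ProperSpace E] {f : E → ℝ}
    (hf : Continuous f) {x₀ : E} {σ : ℝ} (hσ : 0 ≤ σ)
    (hgrow : ∀ c ∈ Ioo (0 : ℝ) 1, ∀ y, dist y x₀ < σ → f x₀ ≤ f y →
      ∃ η > 0, ∃ v : E, ‖v‖ ≤ 1 ∧ ∀ h ∈ Icc 0 η, f y + c * h ≤ f (y + h • v)) :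
    ∃ y ∈ closedBall x₀ σ, f x₀ + σ ≤ f y := by
  obtain ⟨y, hy, hymax⟩ := (isCompact_closedBall x₀ σ).exists_isMaxOn
    ⟨x₀, mem_closedBall_self hσ⟩ hf.continuousOn
  refine ⟨y, hy, ?_⟩
  have hlim : Tendsto (fun c : ℝ => f x₀ + c * σ) (𝓝[<] 1) (𝓝 (f x₀ + 1 * σ)) :=
    ((continuous_const.add (continuous_id.mul continuous_const)).tendsto 1).mono_left
      nhdsWithin_le_nhds
  rw [one_mul] at hlim
  refine le_of_tendsto hlim (eventually_of_mem (Ioo_mem_nhdsLT zero_lt_one) fun c hc => ?_)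
  obtain ⟨z, hz, hzc⟩ := exists_mem_closedBall_add_mul_le hf hσ hc.1.le (hgrow c hc)
  exact hzc.trans (hymax hz)

theorem two_mul_inner_adjoint_le_of_le_dist [InnerProductSpace ℝ E] [CompleteSpace E]
    [InnerProductSpace ℝ E'] [CompleteSpace E'] {F : E → E'} {A : E →L[ℝ] E'} {p q : E} {v : E'}
    {r δ K : ℝ} (hr : 0 ≤ r) (hv : ‖v‖ = 1) (hK : 0 ≤ K) (hqp : ‖q - p‖ ≤ δ)
    (hball : r ≤ dist (F p + r • v) (F q))
    (htaylor : ‖F q - F p - A (q - p)‖ ≤ K * ‖q - p‖ ^ 2) :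
    2 * r * ⟪q - p, ContinuousLinearMap.adjoint A v⟫ ≤
      ((‖A‖ + K * δ) ^ 2 + 2 * r * K) * ‖q - p‖ ^ 2 := by
  set h := q - p
  set e := F q - F p - A h
  have hev : -(K * ‖h‖ ^ 2) ≤ ⟪e, v⟫ := by
    have := abs_real_inner_le_norm e v
    rw [hv, mul_one] at this
    linarith [neg_abs_le ⟪e, v⟫]
  have hAe : ‖A h + e‖ ≤ (‖A‖ + K * δ) * ‖h‖ := by
    calc ‖A h + e‖ ≤ ‖A‖ * ‖h‖ + K * ‖h‖ ^ 2 :=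
          (norm_add_le _ _).trans (add_le_add (A.le_opNorm h) htaylor)
      _ ≤ (‖A‖ + K * δ) * ‖h‖ := by
          nlinarith [mul_le_mul_of_nonneg_left hqp (mul_nonneg hK (norm_nonneg h))]
  have hfar : 2 * r * ⟪A h + e, v⟫ ≤ ‖A h + e‖ ^ 2 := by
    refine (le_norm_sub_smul_iff hv hr).1 ?_
    rw [show A h + e - r • v = F q - (F p + r • v) by simp only [e]; abel, ← dist_eq_norm,
      dist_comm]
    exact hball
  rw [inner_add_left, ← ContinuousLinearMap.adjoint_inner_right] at hfar
  nlinarith [pow_le_pow_left₀ (norm_nonneg _) hAe 2]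

theorem exists_forall_le_dist_adjoint_of_forall_le_dist [InnerProductSpace ℝ E] [CompleteSpace E]
    [InnerProductSpace ℝ E'] [CompleteSpace E'] {S : Set E} {F : E → E'} {A : E →L[ℝ] E'} {p : E}
    {v : E'} {r δ K : ℝ} (hr : 0 < r) (hv : ‖v‖ = 1) (hδ : 0 < δ) (hK : 0 ≤ K)
    (hball : ∀ q ∈ S, r ≤ dist (F p + r • v) (F q))
    (htaylor : ∀ q ∈ S, dist q p < δ → ‖F q - F p - A (q - p)‖ ≤ K * ‖q - p‖ ^ 2)
    (hu : ContinuousLinearMap.adjoint A v ≠ 0) :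
    ∃ ε > 0, ∀ q ∈ S, ε ≤ dist (p + ε • (‖ContinuousLinearMap.adjoint A v‖⁻¹ •
      ContinuousLinearMap.adjoint A v)) q := by
  set u := ContinuousLinearMap.adjoint A v
  set w := ‖u‖⁻¹ • u
  have hu0 : 0 < ‖u‖ := norm_pos_iff.2 hu
  have hw : ‖w‖ = 1 := by
    rw [norm_smul, norm_inv, norm_norm, inv_mul_cancel₀ hu0.ne']
  set M := (‖A‖ + K * δ) ^ 2 + 2 * r * K
  have hM : 0 ≤ M := by positivity
  set ε := min (δ / 2) (r * ‖u‖ / (M + 1))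
  have hε : 0 < ε := lt_min (by linarith) (by positivity)
  have hεM : ε * (M + 1) ≤ r * ‖u‖ := by
    rw [← le_div_iff₀ (by positivity)]
    exact min_le_right _ _
  refine ⟨ε, hε, fun q hq => le_of_not_gt fun hlt => ?_⟩
  have hqε : ‖q - p - ε • w‖ < ε := by
    rwa [dist_comm, dist_eq_norm, sub_add_eq_sub_sub] at hlt
  have hqp : ‖q - p‖ < δ := by
    have := norm_sub_norm_le (q - p) (ε • w)
    rw [norm_smul, hw, mul_one, Real.norm_of_nonneg hε.le] at this
    linarith [min_le_left (δ / 2) (r * ‖u‖ / (M + 1))]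
  have hqw : ‖q - p‖ ^ 2 < 2 * ε * ⟪q - p, w⟫ :=
    not_le.1 ((le_norm_sub_smul_iff hw hε.le).not.1 hqε.not_ge)
  have hnormal : 2 * r * ⟪q - p, u⟫ ≤ M * ‖q - p‖ ^ 2 :=
    two_mul_inner_adjoint_le_of_le_dist hr.le hv hK hqp.le (hball q hq)
      (htaylor q hq (by rwa [dist_eq_norm]))
  rw [show u = ‖u‖ • w by rw [smul_inv_smul₀ hu0.ne'], real_inner_smul_right] at hnormal
  nlinarith [mul_pos hr hu0]

end General

section Reach

variable {d : ℕ} {S : Set (EuclideanSpace ℝ (Fin d))}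

theorem proj_nonempty (hS : IsClosed S) (hne : S.Nonempty) (x : EuclideanSpace ℝ (Fin d)) :
    (proj S x).Nonempty := by
  obtain ⟨q, hq, hd⟩ := hS.exists_infDist_eq_dist hne x
  exact ⟨q, hq, hd.symm⟩

theorem proj_subsingleton_of_lt_reach {x : EuclideanSpace ℝ (Fin d)}
    (h : ENNReal.ofReal (infDist x S) < reach S) : (proj S x).Subsingleton := by
  by_contra hx
  rw [Set.not_subsingleton_iff] at hx
  obtain ⟨p, hp⟩ := hx.nonempty
  refine h.not_ge ?_
  calc reach S ≤ infEDist p (medialAxis S) := iInf₂_le p hp.1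
    _ ≤ edist p x := Metric.infEDist_le_edist_of_mem hx
    _ = ENNReal.ofReal (infDist x S) := by rw [edist_dist, dist_comm, hp.2]

theorem ofReal_le_reach {b : ℝ} (h : ∀ m ∈ medialAxis S, b ≤ infDist m S) :
    ENNReal.ofReal b ≤ reach S := by
  refine le_iInf₂ fun p hp => Metric.le_infEDist.2 fun m hm => ?_
  rw [edist_dist, dist_comm]
  exact ENNReal.ofReal_le_ofReal ((h m hm).trans (infDist_le_dist_of_mem hp))

theorem exists_forall_dist_lt_of_mem_proj (hS : IsClosed S) {z q : EuclideanSpace ℝ (Fin d)}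
    (hq : q ∈ proj S z) (huniq : (proj S z).Subsingleton) {ρ : ℝ} (hρ : 0 < ρ) :
    ∃ η > 0, ∀ z', dist z' z ≤ η → ∀ q' ∈ proj S z', dist q' q < ρ := by
  set D := infDist z S
  -- by compactness and uniqueness of `q`, points of `S` near `z` but away from `q` are uniformly
  -- farther from `z` than `D`
  set K := S ∩ closedBall z (D + 1) ∩ (ball q ρ)ᶜ
  have hK : IsCompact K :=
    ((isCompact_closedBall z (D + 1)).inter_left hS).inter_right isOpen_ball.isClosed_compl
  have hKfar : ∃ δ > 0, ∀ y ∈ K, D + δ ≤ dist z y := by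
    rcases K.eq_empty_or_nonempty with hK0 | hKne
    · exact ⟨1, one_pos, by simp [hK0]⟩
    obtain ⟨y₀, ⟨⟨hy₀S, -⟩, hy₀ρ⟩, hmin⟩ :=
      hK.exists_isMinOn hKne
        (continuous_const.dist continuous_id : Continuous fun y => dist z y).continuousOn
    have hD : D < dist z y₀ := (infDist_le_dist_of_mem hy₀S).lt_of_ne fun hD =>
      hy₀ρ (huniq ⟨hy₀S, hD.symm⟩ hq ▸ mem_ball_self hρ)
    exact ⟨dist z y₀ - D, sub_pos.2 hD, fun y hy => by linarith [isMinOn_iff.1 hmin y hy]⟩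
  obtain ⟨δ, hδ, hδK⟩ := hKfar
  refine ⟨min (1 / 2) (δ / 3), by positivity, fun z' hz' q' hq' => ?_⟩
  obtain ⟨hz'1, hz'δ⟩ := le_min_iff.1 hz'
  have hq'z : dist z q' ≤ D + 2 * dist z' z := by
    have h1 := dist_triangle z z' q'
    have h2 : infDist z' S ≤ D + dist z' z := infDist_le_infDist_add_dist
    rw [hq'.2, dist_comm z z'] at h1
    linarith
  by_contra hq'q
  have hq'K : q' ∈ K :=
    ⟨⟨hq'.1, mem_closedBall.2 (by rw [dist_comm]; linarith)⟩, by simpa using hq'q⟩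
  linarith [hδK q' hq'K]

theorem exists_forall_infDist_add_mul_le (hS : IsClosed S) {z q : EuclideanSpace ℝ (Fin d)}
    (hq : q ∈ proj S z) (huniq : (proj S z).Subsingleton) (hz : 0 < infDist z S) {c : ℝ}
    (hc0 : 0 ≤ c) (hc1 : c < 1) :
    ∃ η > 0, ∃ v : EuclideanSpace ℝ (Fin d), ‖v‖ = 1 ∧
      ∀ h ∈ Icc 0 η, infDist z S + c * h ≤ infDist (z + h • v) S := by
  set D := infDist z S
  set w := D⁻¹ • (z - q)
  have hzq : ‖z - q‖ = D := by rw [← dist_eq_norm, hq.2]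
  have hw : ‖w‖ = 1 := by rw [norm_smul, hzq, norm_inv, Real.norm_of_nonneg hz.le,
    inv_mul_cancel₀ hz.ne']
  have hzqw : ⟪z - q, w⟫ = D := by
    rw [real_inner_smul_right, real_inner_self_eq_norm_sq, hzq, sq, inv_mul_cancel_left₀ hz.ne']
  set ρ := (1 - c) * D / 3
  obtain ⟨η, hη, hηq⟩ := exists_forall_dist_lt_of_mem_proj hS hq huniq (by positivity : 0 < ρ)
  refine ⟨η, hη, w, hw, fun h hh => ?_⟩
  obtain ⟨q', hq'⟩ := proj_nonempty hS ⟨q, hq.1⟩ (z + h • w)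
  have hq'q : ‖q - q'‖ < ρ := by
    rw [← dist_eq_norm, dist_comm]
    refine hηq _ ?_ q' hq'
    rw [dist_eq_norm, add_sub_cancel_left, norm_smul, hw, mul_one, Real.norm_of_nonneg hh.1]
    exact hh.2
  set a := z - q'
  have haD : D ≤ ‖a‖ := by rw [← dist_eq_norm]; exact infDist_le_dist_of_mem hq'.1
  have ha : a = (z - q) + (q - q') := by simp only [a]; abel
  have haρ : ‖a‖ ≤ D + ρ := by
    rw [ha, ← hzq]; linarith [norm_add_le (z - q) (q - q')]
  have haw : D - ρ ≤ ⟪a, w⟫ := by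
    have := abs_real_inner_le_norm (q - q') w
    rw [hw, mul_one] at this
    rw [ha, inner_add_left, hzqw]
    linarith [neg_abs_le ⟪q - q', w⟫]
  -- the nearest point `q'` stays so close to `q` that `a` points almost along `w`
  have hcaw : c * ‖a‖ ≤ ⟪a, w⟫ := by
    have hρ : c * (D + ρ) ≤ D - ρ := by
      simp only [ρ]; nlinarith [mul_pos (sub_pos.2 hc1) hz]
    linarith [mul_le_mul_of_nonneg_left haρ hc0]
  have hdist : infDist (z + h • w) S = ‖a + h • w‖ := by
    rw [← hq'.2, dist_eq_norm]; congr 1; simp only [a]; abel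
  have hCS : ‖a‖ * (‖a‖ + c * h) ≤ ‖a‖ * ‖a + h • w‖ := by
    calc ‖a‖ * (‖a‖ + c * h) ≤ ⟪a, a + h • w⟫ := by
          rw [inner_add_right, real_inner_self_eq_norm_sq, real_inner_smul_right]
          nlinarith [hh.1]
      _ ≤ ‖a‖ * ‖a + h • w‖ := real_inner_le_norm _ _
  rw [hdist]
  linarith [le_of_mul_le_mul_left hCS (hz.trans_le haD)]

theorem forall_le_dist_add_smul_of_lt_reach (hS : IsClosed S) {p w : EuclideanSpace ℝ (Fin d)}
    (hp : p ∈ S) (hw : ‖w‖ = 1) {ε : ℝ} (hε : 0 < ε) (hεS : ∀ q ∈ S, ε ≤ dist (p + ε • w) q)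
    {τ : ℝ} (hτ : ENNReal.ofReal τ < reach S) : ∀ q ∈ S, τ ≤ dist (p + τ • w) q := by
  have hdist : ∀ a b : ℝ, dist (p + a • w) (p + b • w) = |a - b| := fun a b => by
    rw [dist_eq_norm, add_sub_add_left_eq_sub, ← sub_smul, norm_smul, hw, mul_one,
      Real.norm_eq_abs]
  rcases le_or_gt τ ε with hτε | hετ
  · intro q hq
    have := dist_triangle (p + ε • w) (p + τ • w) q
    rw [hdist, abs_of_nonneg (sub_nonneg.2 hτε)] at this
    linarith [hεS q hq]
  set x₀ := p + ε • w
  have hx₀ : infDist x₀ S = ε := by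
    refine le_antisymm ?_ ((le_infDist ⟨p, hp⟩).2 hεS)
    simpa [x₀, norm_smul, hw, abs_of_pos hε] using infDist_le_dist_of_mem (x := x₀) hp
  have hgrow : ∀ c ∈ Ioo (0 : ℝ) 1, ∀ y, dist y x₀ < τ - ε → infDist x₀ S ≤ infDist y S →
      ∃ η > 0, ∃ v : EuclideanSpace ℝ (Fin d), ‖v‖ ≤ 1 ∧
        ∀ h ∈ Icc 0 η, infDist y S + c * h ≤ infDist (y + h • v) S := by
    intro c hc y hy hxy
    have hyτ : infDist y S ≤ τ := by
      linarith [infDist_le_infDist_add_dist (x := y) (y := x₀) (s := S)]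
    obtain ⟨q, hq⟩ := proj_nonempty hS ⟨p, hp⟩ y
    have huniq := proj_subsingleton_of_lt_reach ((ENNReal.ofReal_le_ofReal hyτ).trans_lt hτ)
    obtain ⟨η, hη, v, hv, hηv⟩ :=
      exists_forall_infDist_add_mul_le hS hq huniq (by linarith) hc.1.le hc.2
    exact ⟨η, hη, v, hv.le, hηv⟩
  -- `infDist · S` grows at almost unit speed, so it reaches `τ` on the ball of radius `τ - ε`
  obtain ⟨y, hy, hyτ⟩ :=
    exists_mem_closedBall_add_le (continuous_infDist_pt S) (sub_pos.2 hετ).le hgrow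
  rw [hx₀, add_sub_cancel] at hyτ
  -- `y` realises equality in the triangle inequality `dist y p ≤ dist y x₀ + dist x₀ p`
  have hyx₀ : y - x₀ = (τ - ε) • w := by
    refine eq_smul_of_norm_le_of_le_norm_add hw hε (by rwa [← dist_eq_norm]) ?_
    have : y - x₀ + ε • w = y - p := by simp only [x₀]; abel
    rw [add_sub_cancel, this, ← dist_eq_norm]
    exact hyτ.trans (infDist_le_dist_of_mem hp)
  have hy : y = p + τ • w := by linear_combination (norm := module) hyx₀
  intro q hq
  rw [← hy]
  exact hyτ.trans (infDist_le_dist_of_mem hq)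

end Reach

section Diffeomorphism

variable {d : ℕ} {S : Set (EuclideanSpace ℝ (Fin d))} {s : ℝ}
  {F : EuclideanSpace ℝ (Fin d) → EuclideanSpace ℝ (Fin d)}

theorem norm_image_sub_sub_fderiv_le {KDF : ℝ≥0} (hC1 : ContDiffOn ℝ 1 F {x | infDist x S < s})
    (hLDF : LipschitzOnWith KDF (fderiv ℝ F) {x | infDist x S < s}) {p q : EuclideanSpace ℝ (Fin d)}
    (hp : p ∈ S) (hq : q ∈ S) (hpq : dist p q < 2 * s) :
    ‖F q - F p - fderiv ℝ F p (q - p)‖ ≤ KDF / 2 * ‖q - p‖ ^ 2 := by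
  have hseg := segment_subset_setOf_infDist_lt hp hq hpq
  have hU : IsOpen {x | infDist x S < s} := isOpen_lt (continuous_infDist_pt S) continuous_const
  exact norm_sub_sub_apply_le_of_lipschitzOnWith (fun z hz => ((hC1.differentiableOn
    one_ne_zero).differentiableAt (hU.mem_nhds (hseg hz))).hasFDerivAt) (hLDF.mono hseg)

theorem two_mul_inner_adjoint_fderiv_le (hS : IsClosed S) (hs : 0 < s) {t : ℝ} (ht : 0 < t)
    (htr : ENNReal.ofReal t < reach S) {KF KDF : ℝ≥0}
    (hC1 : ContDiffOn ℝ 1 F {x | infDist x S < s})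
    (hLF : LipschitzOnWith KF F {x | infDist x S < s})
    (hLDF : LipschitzOnWith KDF (fderiv ℝ F) {x | infDist x S < s})
    {p q : EuclideanSpace ℝ (Fin d)} {v : EuclideanSpace ℝ (Fin d)} {r : ℝ} (hp : p ∈ S)
    (hq : q ∈ S) (hv : ‖v‖ = 1) (hr : 0 < r) (hball : ∀ q ∈ S, r ≤ dist (F p + r • v) (F q)) :
    2 * t * ⟪q - p, ContinuousLinearMap.adjoint (fderiv ℝ F p) v⟫ ≤ KF * ‖q - p‖ ^ 2 := by
  set u := ContinuousLinearMap.adjoint (fderiv ℝ F p) v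
  have hU : IsOpen {x | infDist x S < s} := isOpen_lt (continuous_infDist_pt S) continuous_const
  have hpU : {x | infDist x S < s} ∈ 𝓝 p :=
    hU.mem_nhds (show infDist p S < s by rwa [infDist_zero_of_mem hp])
  have hu : ‖u‖ ≤ KF := by
    calc ‖u‖ ≤ ‖ContinuousLinearMap.adjoint (fderiv ℝ F p)‖ * ‖v‖ :=
          ContinuousLinearMap.le_opNorm _ _
      _ = ‖fderiv ℝ F p‖ := by rw [LinearIsometryEquiv.norm_map, hv, mul_one]
      _ ≤ KF := ((hC1.differentiableOn one_ne_zero).differentiableAt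
          hpU).hasFDerivAt.le_of_lipschitzOn hpU hLF
  rcases eq_or_ne u 0 with hu0 | hu0
  · rw [hu0, inner_zero_right, mul_zero]
    positivity
  obtain ⟨ε, hε, hεS⟩ := exists_forall_le_dist_adjoint_of_forall_le_dist hr hv hs
    (by positivity : (0 : ℝ) ≤ KDF / 2) hball
    (fun q hq hqp => norm_image_sub_sub_fderiv_le hC1 hLDF hp hq (by rw [dist_comm]; linarith))
    hu0
  set w := ‖u‖⁻¹ • u
  have hw : ‖w‖ = 1 := by
    rw [norm_smul, norm_inv, norm_norm, inv_mul_cancel₀ (norm_ne_zero_iff.2 hu0)]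
  have hwq : 2 * t * ⟪q - p, w⟫ ≤ ‖q - p‖ ^ 2 := by
    refine (le_norm_sub_smul_iff hw ht.le).1 ?_
    rw [show q - p - t • w = q - (p + t • w) by abel, ← dist_eq_norm, dist_comm]
    exact forall_le_dist_add_smul_of_lt_reach hS hp hw hε hεS htr q hq
  have huw : ⟪q - p, u⟫ = ‖u‖ * ⟪q - p, w⟫ := by
    rw [real_inner_smul_right, mul_inv_cancel_left₀ (norm_ne_zero_iff.2 hu0)]
  rw [huw]
  nlinarith [norm_nonneg u, sq_nonneg ‖q - p‖]

theorem two_mul_inner_image_sub_le (hS : IsClosed S) (hs : 0 < s) {t : ℝ} (ht : 0 < t)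
    (htr : ENNReal.ofReal t < reach S) {KF KDF : ℝ≥0}
    (hC1 : ContDiffOn ℝ 1 F {x | infDist x S < s})
    (hLF : LipschitzOnWith KF F {x | infDist x S < s})
    (hLDF : LipschitzOnWith KDF (fderiv ℝ F) {x | infDist x S < s})
    {p q : EuclideanSpace ℝ (Fin d)} {v : EuclideanSpace ℝ (Fin d)} {r : ℝ} (hp : p ∈ S)
    (hq : q ∈ S) (hpq : dist p q < 2 * s) (hv : ‖v‖ = 1) (hr : 0 < r)
    (hball : ∀ q ∈ S, r ≤ dist (F p + r • v) (F q)) :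
    2 * t * ⟪F q - F p, v⟫ ≤ (KF + t * KDF) * ‖q - p‖ ^ 2 := by
  have hnormal := two_mul_inner_adjoint_fderiv_le hS hs ht htr hC1 hLF hLDF hp hq hv hr hball
  rw [ContinuousLinearMap.adjoint_inner_right] at hnormal
  have hrem : ⟪F q - F p - fderiv ℝ F p (q - p), v⟫ ≤ KDF / 2 * ‖q - p‖ ^ 2 := by
    have := real_inner_le_norm (F q - F p - fderiv ℝ F p (q - p)) v
    rw [hv, mul_one] at this
    exact this.trans (norm_image_sub_sub_fderiv_le hC1 hLDF hp hq hpq)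
  have hsplit : ⟪F q - F p, v⟫ =
      ⟪fderiv ℝ F p (q - p), v⟫ + ⟪F q - F p - fderiv ℝ F p (q - p), v⟫ := by
    rw [← inner_add_left, add_sub_cancel]
  nlinarith

theorem one_le_mul_infDist_of_mem_medialAxis (hS : IsClosed S) (hs : 0 < s) {t : ℝ} (ht : 0 < t)
    (htr : ENNReal.ofReal t < reach S) {G : EuclideanSpace ℝ (Fin d) → EuclideanSpace ℝ (Fin d)}
    {KF KFi KDF : ℝ≥0} (hC1 : ContDiffOn ℝ 1 F {x | infDist x S < s})
    (hLF : LipschitzOnWith KF F {x | infDist x S < s})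
    (hLDF : LipschitzOnWith KDF (fderiv ℝ F) {x | infDist x S < s})
    (hG : ∀ x ∈ {x | infDist x S < s}, G (F x) = x)
    (hLG : LipschitzOnWith KFi G (F '' {x | infDist x S < s}))
    {m : EuclideanSpace ℝ (Fin d)} (hm : m ∈ medialAxis (F '' S))
    (hms : KFi * infDist m (F '' S) < s) :
    1 ≤ infDist m (F '' S) * ((KF / t + KDF) * KFi ^ 2) := by
  obtain ⟨q₁, ⟨⟨p₁, hp₁, rfl⟩, hq₁⟩, q₂, ⟨⟨p₂, hp₂, rfl⟩, hq₂⟩, hq₁₂⟩ := hm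
  set r := infDist m (F '' S)
  have hr : 0 < r := infDist_nonneg.lt_of_ne fun hr0 => hq₁₂ <| by
    rw [← dist_eq_zero.1 (hq₁.trans hr0.symm), ← dist_eq_zero.1 (hq₂.trans hr0.symm)]
  have hSU : ∀ p ∈ S, p ∈ {x | infDist x S < s} := fun p hp => by
    show infDist p S < s
    rwa [infDist_zero_of_mem hp]
  have hp₁₂ : ‖p₂ - p₁‖ ≤ KFi * ‖F p₂ - F p₁‖ := by
    simpa only [hG p₁ (hSU p₁ hp₁), hG p₂ (hSU p₂ hp₂), dist_eq_norm] using
      hLG.dist_le_mul _ (mem_image_of_mem F (hSU p₂ hp₂)) _ (mem_image_of_mem F (hSU p₁ hp₁))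
  have hq₁₂r : ‖F p₂ - F p₁‖ ≤ 2 * r := by
    rw [← dist_eq_norm]
    linarith [dist_triangle_left (F p₂) (F p₁) m]
  set v := r⁻¹ • (m - F p₁)
  have hv : ‖v‖ = 1 := by
    rw [norm_smul, ← dist_eq_norm, hq₁, norm_inv, Real.norm_of_nonneg hr.le, inv_mul_cancel₀ hr.ne']
  have hm_eq : F p₁ + r • v = m := by
    rw [smul_inv_smul₀ hr.ne', add_sub_cancel]
  have hball : ∀ q ∈ S, r ≤ dist (F p₁ + r • v) (F q) := fun q hq => by
    rw [hm_eq]; exact infDist_le_dist_of_mem (mem_image_of_mem F hq)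
  have hchord : ‖F p₂ - F p₁‖ ^ 2 = 2 * r * ⟪F p₂ - F p₁, v⟫ := by
    rw [← two_mul_inner_eq_norm_sq_of_dist_eq (hq₁.trans hq₂.symm), real_inner_smul_right]
    field_simp
  have hinner := two_mul_inner_image_sub_le hS hs ht htr hC1 hLF hLDF hp₁ hp₂ (by
    rw [dist_comm, dist_eq_norm]
    nlinarith [mul_le_mul_of_nonneg_left hq₁₂r KFi.coe_nonneg]) hv hr hball
  have hq₁₂ : 0 < ‖F p₂ - F p₁‖ := norm_pos_iff.2 (sub_ne_zero.2 fun h => hq₁₂ h.symm)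
  have hscaled : t * ‖F p₂ - F p₁‖ ^ 2 ≤ r * (KF + t * KDF) * KFi ^ 2 * ‖F p₂ - F p₁‖ ^ 2 := by
    have hp : ‖p₂ - p₁‖ ^ 2 ≤ KFi ^ 2 * ‖F p₂ - F p₁‖ ^ 2 := by
      rw [← mul_pow]; exact pow_le_pow_left₀ (norm_nonneg _) hp₁₂ 2
    calc t * ‖F p₂ - F p₁‖ ^ 2 = r * (2 * t * ⟪F p₂ - F p₁, v⟫) := by rw [hchord]; ring
      _ ≤ r * ((KF + t * KDF) * ‖p₂ - p₁‖ ^ 2) := by gcongr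
      _ ≤ r * ((KF + t * KDF) * (KFi ^ 2 * ‖F p₂ - F p₁‖ ^ 2)) := by gcongr
      _ = r * (KF + t * KDF) * KFi ^ 2 * ‖F p₂ - F p₁‖ ^ 2 := by ring
  have ht_le := le_of_mul_le_mul_right hscaled (pow_pos hq₁₂ 2)
  rw [show r * ((KF / t + KDF) * KFi ^ 2) = r * (KF + t * KDF) * KFi ^ 2 / t by field_simp,
    le_div_iff₀ ht]
  linarith

end Diffeomorphism

theorem stmt14_general {d : ℕ} (S : Set (EuclideanSpace ℝ (Fin d))) (hS : IsClosed S)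
    (s t : ℝ) (hs : 0 < s) (ht : 0 < t) (htr : ENNReal.ofReal t < reach S)
    (F G : EuclideanSpace ℝ (Fin d) → EuclideanSpace ℝ (Fin d))
    (KF KFi KDF : ℝ≥0)
    (hC1 : ContDiffOn ℝ 1 F {x | Metric.infDist x S < s})
    (hLF : LipschitzOnWith KF F {x | Metric.infDist x S < s})
    (hLDF : LipschitzOnWith KDF (fderiv ℝ F) {x | Metric.infDist x S < s})
    (hG : ∀ x ∈ {x | Metric.infDist x S < s}, G (F x) = x)
    (hLG : LipschitzOnWith KFi G (F '' {x | Metric.infDist x S < s})) :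
    ENNReal.ofReal (min (s / KFi) (1 / ((KF / t + KDF) * KFi ^ 2))) ≤
      reach (F '' S) := by
  refine ofReal_le_reach fun m hm => ?_
  rcases lt_or_ge (KFi * infDist m (F '' S)) s with hms | hms
  · exact (min_le_right _ _).trans <| div_le_of_le_mul₀ (by positivity) infDist_nonneg <|
      one_le_mul_infDist_of_mem_medialAxis hS hs ht htr hC1 hLF hLDF hG hLG hm hms
  · exact (min_le_left _ _).trans <| div_le_of_le_mul₀ KFi.coe_nonneg infDist_nonneg <|
      by rwa [mul_comm]

theorem stmt14 {d : ℕ} (S : Set (EuclideanSpace ℝ (Fin d))) (hS : IsClosed S)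
    (hne : S.Nonempty) (hreach : 0 < reach S)
    (s t : ℝ) (hs : 0 < s) (ht : 0 < t) (htr : ENNReal.ofReal t < reach S)
    (F G : EuclideanSpace ℝ (Fin d) → EuclideanSpace ℝ (Fin d))
    (KF KFi KDF : ℝ≥0)
    (hInj : Set.InjOn F {x | Metric.infDist x S < s})
    (hC1 : ContDiffOn ℝ 1 F {x | Metric.infDist x S < s})
    (hLF : LipschitzOnWith KF F {x | Metric.infDist x S < s})
    (hLDF : LipschitzOnWith KDF (fderiv ℝ F) {x | Metric.infDist x S < s})
    (hG : ∀ x ∈ {x | Metric.infDist x S < s}, G (F x) = x)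
    (hLG : LipschitzOnWith KFi G (F '' {x | Metric.infDist x S < s})) :
    ENNReal.ofReal (min (s / KFi) (1 / ((KF / t + KDF) * KFi ^ 2))) ≤
      reach (F '' S) :=
  stmt14_general S hS s t hs ht htr F G KF KFi KDF hC1 hLF hLDF hG hLG
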